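/- Let ψ(x) = (2πħ)^(−1/4) σ^(−1/2) exp(−(σ̆/(4ħσ))(x−q)² + i(p/ħ)(x−q)) with Re σ > 0, Re σ̆ > 0, Re(σ̄σ̆) = 1, q ≠ 0. Then ‖sgn(·)·ψ(sgn(q)|·|) − sgn(q)·(ψ(·) − ψ(−·))‖_{L²(ℝ)} ≤ e^{−q²/(4ħ|σ|²)}. -/

import Mathlib

open MeasureTheory

/-- The Gaussian coherent state `ψ^ħ(σ, σ̆, q, p; x)`. -/
noncomputable def cohSt (hbar : ℝ) (s sb : ℂ) (q p : ℝ) (x : ℝ) : ℂ :=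
  (((2 * Real.pi * hbar) ^ ((1 : ℝ) / 4) : ℝ) : ℂ)⁻¹ * (s ^ ((1 : ℂ) / 2))⁻¹ *
    Complex.exp (-(sb / (4 * (hbar : ℂ) * s)) * ((x : ℂ) - (q : ℂ)) ^ 2
      + Complex.I * ((p : ℂ) / (hbar : ℂ)) * ((x : ℂ) - (q : ℂ)))

open scoped ComplexConjugate

/-!
Pointwise, the left-hand side equals `sgn x · ψ(−sgn(q)|x|)` whatever the function `ψ` is. For the
coherent state, `Re(σ̄σ̆) = 1` makes `|ψ|` a Gaussian envelope centred at `q` and `|ψ|²` a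
normalized Gaussian of variance `ħ|σ|²`. The point `−sgn(q)|x|` lies at distance `|x| + |q|` from
`q`, and `(|x| + |q|)² ≥ x² + q²`, so the left-hand side is dominated by `e^{−q²/(4ħ|σ|²)} |ψ(x + q)|`,
a translate of `ψ` of L²-norm `e^{−q²/(4ħ|σ|²)}`.
-/

theorem Complex.div_re_eq_conj_mul_re (z w : ℂ) :
    (z / w).re = (conj w * z).re / Complex.normSq w := by
  rw [Complex.div_re, Complex.mul_re, Complex.conj_re, Complex.conj_im]
  ring

theorem sign_mul_apply_sign_mul_abs_sub (f : ℝ → ℂ) {q : ℝ} (hq : q ≠ 0) (x : ℝ) :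
    (Real.sign x : ℂ) * f (Real.sign q * |x|) - (Real.sign q : ℂ) * (f x - f (-x))
      = (Real.sign x : ℂ) * f (-(Real.sign q * |x|)) := by
  rcases hq.lt_or_gt with hq | hq <;> rcases lt_trichotomy x 0 with hx | rfl | hx <;>
    simp [Real.sign_of_neg, Real.sign_of_pos, abs_of_neg, abs_of_pos, *] <;> ring

theorem norm_sign_le_one (x : ℝ) : ‖(Real.sign x : ℂ)‖ ≤ 1 := by
  rcases Real.sign_apply_eq x with h | h | h <;> simp [h]

section CoherentState

variable {hbar : ℝ} {s sb : ℂ}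

theorem ne_zero_of_re_conj_mul_eq_one (hnorm : (conj s * sb).re = 1) : s ≠ 0 := by
  rintro rfl
  simp at hnorm

theorem re_cohSt_exponent (hh : 0 < hbar) (hnorm : (conj s * sb).re = 1) (q p y : ℝ) :
    (-(sb / (4 * (hbar : ℂ) * s)) * ((y : ℂ) - q) ^ 2
      + Complex.I * ((p : ℂ) / hbar) * ((y : ℂ) - q)).re = -(y - q) ^ 2 / (4 * hbar * ‖s‖ ^ 2) := by
  have hdiv : (sb / (4 * (hbar : ℂ) * s)).re = 1 / (4 * hbar * ‖s‖ ^ 2) := by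
    rw [Complex.div_re_eq_conj_mul_re, map_mul, map_mul, Complex.conj_ofReal, Complex.normSq_mul,
      Complex.normSq_mul, Complex.normSq_ofReal, ← Complex.sq_norm s,
      show conj (4 : ℂ) = 4 from map_ofNat _ 4,
      show Complex.normSq 4 = 16 by norm_num [Complex.normSq_apply],
      show (4 : ℂ) * hbar * conj s * sb = ((4 * hbar : ℝ) : ℂ) * (conj s * sb) by push_cast; ring,
      Complex.re_ofReal_mul, hnorm]
    field_simp
    ring
  have hexp : -(sb / (4 * (hbar : ℂ) * s)) * ((y : ℂ) - q) ^ 2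
      + Complex.I * ((p : ℂ) / hbar) * ((y : ℂ) - q)
      = -(((y - q) ^ 2 : ℝ) : ℂ) * (sb / (4 * (hbar : ℂ) * s))
        + ((p / hbar * (y - q) : ℝ) : ℂ) * Complex.I := by
    push_cast; ring
  rw [hexp, Complex.add_re, Complex.re_ofReal_mul, Complex.I_re, mul_zero, add_zero,
    ← Complex.ofReal_neg, Complex.re_ofReal_mul, hdiv]
  ring

theorem norm_cohSt (hh : 0 < hbar) (hnorm : (conj s * sb).re = 1) (q p y : ℝ) :
    ‖cohSt hbar s sb q p y‖ = ((2 * Real.pi * hbar) ^ ((1 : ℝ) / 4))⁻¹ * (‖s‖ ^ ((1 : ℝ) / 2))⁻¹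
      * Real.exp (-(y - q) ^ 2 / (4 * hbar * ‖s‖ ^ 2)) := by
  rw [cohSt, norm_mul, norm_mul, norm_inv, norm_inv, Complex.norm_real, Real.norm_eq_abs,
    abs_of_nonneg (by positivity), Complex.norm_exp, re_cohSt_exponent hh hnorm,
    Complex.norm_cpow_of_ne_zero (ne_zero_of_re_conj_mul_eq_one hnorm)]
  norm_num

theorem norm_cohSt_sq (hh : 0 < hbar) (hnorm : (conj s * sb).re = 1) (q p y : ℝ) :
    ‖cohSt hbar s sb q p y‖ ^ 2 = (√(2 * Real.pi * hbar) * ‖s‖)⁻¹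
      * Real.exp (-(2 / (4 * hbar * ‖s‖ ^ 2)) * (y - q) ^ 2) := by
  have h2ph : 0 ≤ 2 * Real.pi * hbar := by positivity
  rw [norm_cohSt hh hnorm, mul_pow, mul_pow, inv_pow, inv_pow, ← Real.exp_nat_mul,
    ← Real.rpow_natCast, ← Real.rpow_mul h2ph, ← Real.rpow_natCast, ← Real.rpow_mul (norm_nonneg s),
    Real.sqrt_eq_rpow, mul_inv, Nat.cast_ofNat,
    show (1 : ℝ) / 4 * 2 = 1 / 2 by norm_num, show (1 : ℝ) / 2 * 2 = 1 by norm_num, Real.rpow_one]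
  congr 2
  ring

theorem integral_norm_cohSt_sq (hh : 0 < hbar) (hnorm : (conj s * sb).re = 1) (q p : ℝ) :
    ∫ y, ‖cohSt hbar s sb q p y‖ ^ 2 = 1 := by
  have hs : 0 < ‖s‖ := norm_pos_iff.2 (ne_zero_of_re_conj_mul_eq_one hnorm)
  have hwidth : Real.pi / (2 / (4 * hbar * ‖s‖ ^ 2)) = (√(2 * Real.pi * hbar) * ‖s‖) ^ 2 := by
    rw [mul_pow, Real.sq_sqrt (by positivity)]
    field_simp
    ring
  simp_rw [norm_cohSt_sq hh hnorm]
  rw [integral_const_mul, integral_sub_right_eq_self (fun y => Real.exp (-_ * y ^ 2)),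
    integral_gaussian, hwidth, Real.sqrt_sq (by positivity)]
  exact inv_mul_cancel₀ (by positivity)

theorem continuous_cohSt (q p : ℝ) : Continuous (cohSt hbar s sb q p) := by
  unfold cohSt
  fun_prop

theorem eLpNorm_cohSt (hh : 0 < hbar) (hnorm : (conj s * sb).re = 1) (q p : ℝ) :
    eLpNorm (cohSt hbar s sb q p) 2 volume = 1 := by
  have hmem : MemLp (cohSt hbar s sb q p) 2 volume := by
    refine (memLp_two_iff_integrable_sq_norm (continuous_cohSt q p).aestronglyMeasurable).2 ?_
    have hs : 0 < ‖s‖ := norm_pos_iff.2 (ne_zero_of_re_conj_mul_eq_one hnorm)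
    simp_rw [norm_cohSt_sq hh hnorm]
    exact ((integrable_exp_neg_mul_sq (by positivity)).comp_sub_right q).const_mul _
  rw [hmem.eLpNorm_eq_integral_rpow_norm two_ne_zero ENNReal.ofNat_ne_top]
  simp [integral_norm_cohSt_sq hh hnorm]

theorem norm_cohSt_neg_sign_mul_abs_le (hh : 0 < hbar) (hnorm : (conj s * sb).re = 1) {q : ℝ}
    (hq : q ≠ 0) (p x : ℝ) :
    ‖cohSt hbar s sb q p (-(Real.sign q * |x|))‖
      ≤ Real.exp (-q ^ 2 / (4 * hbar * ‖s‖ ^ 2)) * ‖cohSt hbar s sb q p (x + q)‖ := by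
  have hsq : x ^ 2 + q ^ 2 ≤ (-(Real.sign q * |x|) - q) ^ 2 := by
    rcases hq.lt_or_gt with hq | hq
    · rw [Real.sign_of_neg hq]
      nlinarith [abs_nonneg x, sq_abs x]
    · rw [Real.sign_of_pos hq]
      nlinarith [abs_nonneg x, sq_abs x]
  rw [norm_cohSt hh hnorm, norm_cohSt hh hnorm, add_sub_cancel_right, mul_left_comm,
    ← Real.exp_add, ← add_div]
  gcongr ?_ * Real.exp (?_ / _)
  linarith

end CoherentState

theorem stmt9_general (hbar : ℝ) (hh : 0 < hbar) (s sb : ℂ)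
    (hnorm : ((starRingEnd ℂ) s * sb).re = 1) (q p : ℝ) (hq : q ≠ 0) :
    eLpNorm
      (fun x : ℝ =>
        (Real.sign x : ℂ) * cohSt hbar s sb q p (Real.sign q * |x|)
          - (Real.sign q : ℂ) * (cohSt hbar s sb q p x - cohSt hbar s sb q p (-x)))
      2 volume
      ≤ ENNReal.ofReal (Real.exp (-(q ^ 2) / (4 * hbar * ‖s‖ ^ 2))) := by
  set E := Real.exp (-(q ^ 2) / (4 * hbar * ‖s‖ ^ 2))
  calc _ ≤ eLpNorm (E • (cohSt hbar s sb q p ∘ (· + q))) 2 volume := by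
        refine eLpNorm_mono fun x => ?_
        rw [sign_mul_apply_sign_mul_abs_sub _ hq, norm_mul, Pi.smul_apply, Function.comp_apply,
          norm_smul, Real.norm_of_nonneg (Real.exp_pos _).le]
        exact (mul_le_of_le_one_left (norm_nonneg _) (norm_sign_le_one x)).trans
          (norm_cohSt_neg_sign_mul_abs_le hh hnorm hq p x)
    _ = ENNReal.ofReal E := by
        rw [eLpNorm_const_smul, eLpNorm_comp_measurePreserving
            (continuous_cohSt q p).aestronglyMeasurable (measurePreserving_add_right volume q),
          eLpNorm_cohSt hh hnorm, mul_one, Real.enorm_eq_ofReal (Real.exp_pos _).le]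

theorem stmt9 (hbar : ℝ) (hh : 0 < hbar) (s sb : ℂ) (hs : 0 < s.re) (hsb : 0 < sb.re)
    (hnorm : ((starRingEnd ℂ) s * sb).re = 1) (q p : ℝ) (hq : q ≠ 0) :
    eLpNorm
      (fun x : ℝ =>
        (Real.sign x : ℂ) * cohSt hbar s sb q p (Real.sign q * |x|)
          - (Real.sign q : ℂ) * (cohSt hbar s sb q p x - cohSt hbar s sb q p (-x)))
      2 volume
      ≤ ENNReal.ofReal (Real.exp (-(q ^ 2) / (4 * hbar * ‖s‖ ^ 2))) :=
  stmt9_general hbar hh s sb hnorm q p hq
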